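/- Let D be a strongly connected balanced bipartite digraph of order 2a ≥ 8 with partite sets X and Y such that max{d(x), d(y)} ≥ 2a − 1 for every dominating pair of vertices {x, y}. Then for any directed cycle C in D of length m with 2 ≤ m ≤ 2a − 2, D contains a C-bypass. -/

import Mathlib

open Finset

variable {V : Type*}

/-- Total degree (out-degree plus in-degree) of `x` in the digraph with arc relation `A`. -/
noncomputable def deg (A : V → V → Prop) (x : V) : ℕ :=
  Set.ncard {y | A x y} + Set.ncard {y | A y x}

/-- The digraph with arc relation `A` is strongly connected. -/
def StrongConn (A : V → V → Prop) : Prop :=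
  ∀ u v : V, Relation.ReflTransGen A u v

/-- `{x, y}` is a dominating pair: distinct vertices with a common out-neighbour. -/
def DomPair (A : V → V → Prop) (x y : V) : Prop :=
  x ≠ y ∧ ∃ z, A x z ∧ A y z

/-- `X, Y` is a bipartition of the digraph `A`: the two parts partition the vertex
set and every arc joins the two parts. -/
def IsBipartition (A : V → V → Prop) (X Y : Set V) : Prop :=
  Disjoint X Y ∧ X ∪ Y = Set.univ ∧
    ∀ u v, A u v → (u ∈ X ∧ v ∈ Y) ∨ (u ∈ Y ∧ v ∈ X)

/-- A bypass of the vertex set `S`: a directed path with at least 3 vertices, distinct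
endpoints, meeting `S` exactly in its two endpoints. -/
def HasBypass (A : V → V → Prop) (S : Set V) : Prop :=
  ∃ (x y : V) (mid : List V), mid ≠ [] ∧ x ≠ y ∧
    (x :: mid ++ [y]).Nodup ∧ (x :: mid ++ [y]).Chain' A ∧
    x ∈ S ∧ y ∈ S ∧ ∀ v ∈ mid, v ∉ S

/-!
Suppose that the cycle has no bypass and let `S` be its vertex set. A walk that leaves `S` at `s`
and first returns to `S` at `t ≠ s` contains a bypass, so every vertex `v` off `S` has a single
attachment vertex `att v ∈ S`: every arc between `S` and a vertex reachable from `v` outside `S`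
is incident with `att v`. Hence a vertex off `S` is adjacent only to its attachment vertex and to
vertices off `S` with the same attachment.

Take `v` off `S` attached at `s = f i` in the part `X`, and an in-neighbour `w` of `s` attached at
`s`. Then `w` and the cycle predecessor `p = f (i - 1)` form a dominating pair, while
`d(w) ≤ 2 (1 + |X \ S ∩ att⁻¹ s|)` and `d(p) ≤ 2 (m / 2 + |X \ S ∩ att⁻¹ p|)`. As `X \ S` has
`a - m / 2` vertices, either `m = 2` and all of `X \ S` is attached at `s`, or all of it is
attached at `p`. For `m > 2`, applying this at `s` and then at `p` attaches every vertex off `S`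
at `p` or `f (i - 2)`, contradicting `att v = s`. For `m = 2` each remaining configuration yields
a vertex off `S` without out-neighbours or a dominating pair of vertices of degree below `2a - 1`.
-/

open Relation

theorem List.exists_nodup_isChain_cons_of_relationReflTransGen {α : Type*} {r : α → α → Prop}
    {a b : α} (h : ReflTransGen r a b) :
    ∃ l, IsChain r (a :: l) ∧ (a :: l).getLast? = some b ∧ (a :: l).Nodup := by
  induction h using ReflTransGen.head_induction_on with
  | refl => exact ⟨[], .singleton _, rfl, nodup_singleton _⟩
  | @head a c hac _ ih =>
    obtain ⟨l, hchain, hlast, hnodup⟩ := ih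
    by_cases ha : a ∈ c :: l
    · obtain ⟨p, q, hpq⟩ := append_of_mem ha
      rw [hpq] at hchain hlast hnodup
      refine ⟨q, hchain.right_of_append, ?_, hnodup.sublist (sublist_append_right _ _)⟩
      simpa using hlast
    · exact ⟨c :: l, .cons_cons hac hchain, by simpa using hlast,
        nodup_cons.2 ⟨ha, hnodup⟩⟩

theorem Set.subset_of_ncard_le_ncard_inter {α : Type*} [Finite α] {s t : Set α}
    (h : s.ncard ≤ (s ∩ t).ncard) : s ⊆ t :=
  Set.inter_eq_left.1 (Set.eq_of_subset_of_ncard_le Set.inter_subset_left h)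

theorem ZMod.sub_one_sub_one_eq_self_iff {m : ℕ} (i : ZMod m) : i - 1 - 1 = i ↔ m ∣ 2 := by
  rw [sub_sub, sub_eq_self, one_add_one_eq_two, ← Nat.cast_ofNat, ZMod.natCast_eq_zero_iff]

theorem StrongConn.exists_arc {A : V → V → Prop} (hstrong : StrongConn A) {u v : V}
    (h : u ≠ v) : ∃ w, A u w := by
  rcases (hstrong u v).cases_head with rfl | ⟨w, huw, -⟩
  exacts [absurd rfl h, ⟨w, huw⟩]

theorem deg_le_two_mul_ncard [Finite V] {A : V → V → Prop} {v : V} {T : Set V}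
    (h : ∀ u, A v u ∨ A u v → u ∈ T) : deg A v ≤ 2 * T.ncard := by
  have hout := Set.ncard_le_ncard (s := {u | A v u}) (fun u hu => h u (.inl hu)) T.toFinite
  have hin := Set.ncard_le_ncard (s := {u | A u v}) (fun u hu => h u (.inr hu)) T.toFinite
  unfold deg
  omega

namespace IsBipartition

variable {A : V → V → Prop} {X Y : Set V} {u v : V}

theorem symm (hbip : IsBipartition A X Y) : IsBipartition A Y X :=
  ⟨hbip.1.symm, Set.union_comm X Y ▸ hbip.2.1, fun u v h => (hbip.2.2 u v h).symm⟩

theorem mem_or_mem (hbip : IsBipartition A X Y) (v : V) : v ∈ X ∨ v ∈ Y :=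
  Set.eq_univ_iff_forall.1 hbip.2.1 v

theorem notMem_right (hbip : IsBipartition A X Y) (hv : v ∈ X) : v ∉ Y :=
  Set.disjoint_left.1 hbip.1 hv

theorem mem_right_of_adj (hbip : IsBipartition A X Y) (hu : u ∈ X) (h : A u v ∨ A v u) :
    v ∈ Y := by
  rcases h with h | h <;> rcases hbip.2.2 _ _ h with ⟨h1, h2⟩ | ⟨h1, h2⟩
  exacts [h2, absurd hu (hbip.notMem_right · h1), absurd hu (hbip.notMem_right · h2), h1]

theorem mem_left_iff (hbip : IsBipartition A X Y) (h : A u v) : v ∈ X ↔ u ∉ X := by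
  rcases hbip.mem_or_mem u with hu | hu
  · exact iff_of_false (hbip.symm.notMem_right (hbip.mem_right_of_adj hu (.inl h))) (· hu)
  · exact iff_of_true (hbip.symm.mem_right_of_adj hu (.inl h)) (hbip.symm.notMem_right hu)

theorem two_mul_ncard_inter_range {m : ℕ} [NeZero m] (hbip : IsBipartition A X Y)
    {f : ZMod m → V} (hinj : Function.Injective f) (hcyc : ∀ i, A (f i) (f (i + 1))) :
    2 * (X ∩ Set.range f).ncard = m := by
  have hshift : (· + 1) ⁻¹' (f ⁻¹' X) = (f ⁻¹' X)ᶜ := by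
    ext i
    exact hbip.mem_left_iff (hcyc i)
  have hcompl := Set.ncard_preimage_of_injective_subset_range (add_left_injective (1 : ZMod m))
    (s := f ⁻¹' X) fun i _ => ⟨i - 1, sub_add_cancel i 1⟩
  rw [hshift] at hcompl
  have htotal := Set.ncard_add_ncard_compl (f ⁻¹' X)
  rw [Nat.card_zmod] at htotal
  rw [← Set.image_preimage_eq_inter_range, Set.ncard_image_of_injective _ hinj]
  omega

theorem two_mul_ncard_sdiff_range [Finite V] {m a : ℕ} [NeZero m] (hbip : IsBipartition A X Y)
    (hX : X.ncard = a) {f : ZMod m → V} (hinj : Function.Injective f)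
    (hcyc : ∀ i, A (f i) (f (i + 1))) : 2 * (X \ Set.range f).ncard + m = 2 * a := by
  have := hbip.two_mul_ncard_inter_range hinj hcyc
  have := Set.ncard_inter_add_ncard_sdiff_eq_ncard X (Set.range f)
  omega

theorem eq_or_eq_of_subset_fibers {S : Set V} {g : V → V} {s t : V}
    (hbip : IsBipartition A X Y) (hX : X \ S ⊆ g ⁻¹' {s}) (hY : Y \ S ⊆ g ⁻¹' {t})
    (hv : v ∉ S) : g v = s ∨ g v = t := by
  rcases hbip.mem_or_mem v with h | h
  exacts [.inl (hX ⟨h, hv⟩), .inr (hY ⟨h, hv⟩)]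

end IsBipartition

def OffArc (A : V → V → Prop) (S : Set V) (u v : V) : Prop := A u v ∧ u ∉ S ∧ v ∉ S

section Attachment

variable {A : V → V → Prop} {S : Set V} {s t u v : V}

def Enters (A : V → V → Prop) (S : Set V) (s v : V) : Prop :=
  s ∈ S ∧ ∃ r, A s r ∧ r ∉ S ∧ ReflTransGen (OffArc A S) r v

def Exits (A : V → V → Prop) (S : Set V) (v t : V) : Prop :=
  t ∈ S ∧ ∃ r, ReflTransGen (OffArc A S) v r ∧ r ∉ S ∧ A r t

theorem hasBypass_of_enters_of_exits (hs : Enters A S s v) (ht : Exits A S v t) (hst : s ≠ t) :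
    HasBypass A S := by
  obtain ⟨hs, u, hsu, hu, huv⟩ := hs
  obtain ⟨ht, w, hvw, -, hwt⟩ := ht
  obtain ⟨l, hchain, hlast, hnodup⟩ :=
    List.exists_nodup_isChain_cons_of_relationReflTransGen (huv.trans hvw)
  have hoff : ∀ x ∈ u :: l, x ∉ S := hchain.induction _ _ (fun _ _ h _ => h.2.2) fun _ => hu
  refine ⟨s, t, u :: l, List.cons_ne_nil _ _, hst, ?_, ?_, hs, ht, hoff⟩
  · have hsl : s ∉ u :: l := fun h => hoff s h hs
    have htl : t ∉ u :: l := fun h => hoff t h ht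
    rw [List.cons_append, List.nodup_cons, List.nodup_append]
    grind
  · rw [List.Chain', List.cons_append, ← List.cons_append]
    refine .append (.cons_cons hsu (hchain.imp fun _ _ h => h.1)) (.singleton t) ?_
    simpa [List.getLast?_cons_cons, hlast] using hwt

theorem Enters.offArc (hs : Enters A S s u) (huv : OffArc A S u v) : Enters A S s v :=
  let ⟨hs, r, hsr, hr, hru⟩ := hs
  ⟨hs, r, hsr, hr, hru.tail huv⟩

theorem enters_of_arc (hs : s ∈ S) (hv : v ∉ S) (hsv : A s v) : Enters A S s v :=
  ⟨hs, v, hsv, hv, .refl⟩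

theorem exits_of_arc (hv : v ∉ S) (ht : t ∈ S) (hvt : A v t) : Exits A S v t :=
  ⟨ht, v, .refl, hv, hvt⟩

theorem exists_enters_of_reflTransGen (h : ReflTransGen A u v) (hu : u ∈ S) (hv : v ∉ S) :
    ∃ s, Enters A S s v := by
  induction h with
  | refl => exact absurd hu hv
  | @tail b c _ hbc ih =>
    by_cases hb : b ∈ S
    · exact ⟨b, enters_of_arc hb hv hbc⟩
    · obtain ⟨s, hs⟩ := ih hb
      exact ⟨s, hs.offArc ⟨hbc, hb, hv⟩⟩

theorem exists_exits_of_reflTransGen (h : ReflTransGen A u v) (hu : u ∉ S) (hv : v ∈ S) :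
    ∃ t, Exits A S u t := by
  induction h using ReflTransGen.head_induction_on with
  | refl => exact absurd hv hu
  | @head a c hac _ ih =>
    by_cases hc : c ∈ S
    · exact ⟨c, exits_of_arc hu hc hac⟩
    · obtain ⟨t, ht, r, hcr, hr, hrt⟩ := ih hc
      exact ⟨t, ht, r, .head ⟨hac, hu, hc⟩ hcr, hr, hrt⟩

structure IsAttachment (A : V → V → Prop) (S : Set V) (att : V → V) : Prop where
  mem {v : V} : v ∉ S → att v ∈ S
  eq_of_offArc {u v : V} : u ∉ S → v ∉ S → A u v → att u = att v
  eq_of_arc_to {s v : V} : s ∈ S → v ∉ S → A s v → s = att v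
  eq_of_arc_from {v t : V} : v ∉ S → t ∈ S → A v t → t = att v

theorem exists_isAttachment (hstrong : StrongConn A) (hS : S.Nonempty) (hnb : ¬HasBypass A S) :
    ∃ att, IsAttachment A S att := by
  obtain ⟨s₀, hs₀⟩ := hS
  have hent : ∀ v ∉ S, ∃ s, Enters A S s v := fun v hv =>
    exists_enters_of_reflTransGen (hstrong s₀ v) hs₀ hv
  have hext : ∀ v ∉ S, ∃ t, Exits A S v t := fun v hv =>
    exists_exits_of_reflTransGen (hstrong v s₀) hv hs₀
  choose! att hatt using hext
  have enters_eq {s v} (hv : v ∉ S) (hs : Enters A S s v) : s = att v := by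
    by_contra hne
    exact hnb (hasBypass_of_enters_of_exits hs (hatt v hv) hne)
  have exits_eq {v t} (hv : v ∉ S) (ht : Exits A S v t) : t = att v := by
    obtain ⟨s, hs⟩ := hent v hv
    by_contra hne
    exact hnb (hasBypass_of_enters_of_exits hs ht fun h => hne (h ▸ enters_eq hv hs))
  refine ⟨att, fun hv => (hatt _ hv).1, fun hu hv huv => ?_, fun hs hv hsv => ?_,
    fun hv ht hvt => exits_eq hv (exits_of_arc hv ht hvt)⟩
  · obtain ⟨s, hs⟩ := hent _ hu
    exact (enters_eq hu hs).symm.trans (enters_eq hv (hs.offArc ⟨huv, hu, hv⟩))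
  · exact enters_eq hv (enters_of_arc hs hv hsv)

namespace IsAttachment

variable {att : V → V}

theorem eq_of_reflTransGen (hatt : IsAttachment A S att) (h : ReflTransGen (OffArc A S) u v) :
    att u = att v := by
  induction h with
  | refl => rfl
  | tail _ h ih => exact ih.trans (hatt.eq_of_offArc h.2.1 h.2.2 h.1)

theorem exists_arc_to_att (hatt : IsAttachment A S att) (hstrong : StrongConn A) (hs : s ∈ S)
    (hv : v ∉ S) : ∃ w ∉ S, att w = att v ∧ A w (att v) := by
  obtain ⟨t, ht, w, hvw, hw, hwt⟩ := exists_exits_of_reflTransGen (hstrong v s) hv hs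
  have hwv : att w = att v := (hatt.eq_of_reflTransGen hvw).symm
  exact ⟨w, hw, hwv, hwv ▸ hatt.eq_of_arc_from hw ht hwt ▸ hwt⟩

theorem eq_or_of_adj_of_notMem (hatt : IsAttachment A S att) (hv : v ∉ S) (h : A v u ∨ A u v) :
    u = att v ∨ u ∉ S ∧ att u = att v := by
  by_cases hu : u ∈ S
  · rcases h with h | h
    exacts [.inl (hatt.eq_of_arc_from hv hu h), .inl (hatt.eq_of_arc_to hu hv h)]
  · rcases h with h | h
    exacts [.inr ⟨hu, (hatt.eq_of_offArc hv hu h).symm⟩,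
      .inr ⟨hu, hatt.eq_of_offArc hu hv h⟩]

theorem mem_or_of_adj_of_mem (hatt : IsAttachment A S att) (hv : v ∈ S) (h : A v u ∨ A u v) :
    u ∈ S ∨ u ∉ S ∧ att u = v := by
  by_cases hu : u ∈ S
  · exact .inl hu
  · rcases h with h | h
    exacts [.inr ⟨hu, (hatt.eq_of_arc_to hv hu h).symm⟩,
      .inr ⟨hu, (hatt.eq_of_arc_from hu hv h).symm⟩]

end IsAttachment
end Attachment

section Bipartite

variable {A : V → V → Prop} {S X Y : Set V} {att : V → V} {a : ℕ} {s t v : V}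

theorem IsAttachment.deg_le_of_notMem [Finite V] (hatt : IsAttachment A S att)
    (hbip : IsBipartition A X Y) (hvY : v ∈ Y) (hv : v ∉ S) :
    deg A v ≤ 2 * ((X ∩ {att v}).ncard + (X \ S ∩ att ⁻¹' {att v}).ncard) := by
  refine (deg_le_two_mul_ncard fun u h => ?_).trans
    (Nat.mul_le_mul_left 2 (Set.ncard_union_le _ _))
  have huX := hbip.symm.mem_right_of_adj hvY h
  rcases hatt.eq_or_of_adj_of_notMem hv h with rfl | ⟨hu, hatt_u⟩
  exacts [.inl ⟨huX, rfl⟩, .inr ⟨⟨huX, hu⟩, hatt_u⟩]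

theorem IsAttachment.deg_le_of_mem [Finite V] (hatt : IsAttachment A S att)
    (hbip : IsBipartition A X Y) (hvY : v ∈ Y) (hv : v ∈ S) :
    deg A v ≤ 2 * ((X ∩ S).ncard + (X \ S ∩ att ⁻¹' {v}).ncard) := by
  refine (deg_le_two_mul_ncard fun u h => ?_).trans
    (Nat.mul_le_mul_left 2 (Set.ncard_union_le _ _))
  have huX := hbip.symm.mem_right_of_adj hvY h
  rcases hatt.mem_or_of_adj_of_mem hv h with hu | ⟨hu, hatt_u⟩
  exacts [.inl ⟨huX, hu⟩, .inr ⟨⟨huX, hu⟩, hatt_u⟩]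

theorem IsAttachment.false_of_attach_same_side (hatt : IsAttachment A S att)
    (hbip : IsBipartition A X Y) (hstrong : StrongConn A) (hX : X \ S ⊆ att ⁻¹' {s})
    (hY : Y \ S ⊆ att ⁻¹' {t}) (hs : s ∈ X) (hst : s ≠ t) (hne : (X \ S).Nonempty) :
    False := by
  obtain ⟨x, hxX, hx⟩ := hne
  have hxs : att x = s := hX ⟨hxX, hx⟩
  obtain ⟨u, hxu⟩ := hstrong.exists_arc (ne_of_mem_of_not_mem (hatt.mem hx) hx).symm
  have huY := hbip.mem_right_of_adj hxX (.inl hxu)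
  rcases hatt.eq_or_of_adj_of_notMem hx (.inl hxu) with rfl | ⟨hu, hux⟩
  · exact hbip.notMem_right hs (hxs ▸ huY)
  · exact hst (hxs ▸ hux ▸ hY ⟨huY, hu⟩)

theorem IsAttachment.false_of_attach_other_side [Finite V] (hatt : IsAttachment A S att)
    (hbip : IsBipartition A X Y) (hstrong : StrongConn A)
    (hdeg : ∀ x y, DomPair A x y → 2 * a - 1 ≤ max (deg A x) (deg A y)) (ha : 2 ≤ a)
    (hX : X \ S ⊆ att ⁻¹' {t}) (hY : Y \ S ⊆ att ⁻¹' {s}) (hst : s ≠ t)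
    (hY2 : 1 < (Y \ S).ncard) : False := by
  have hnbr : ∀ y ∈ Y \ S, ∀ u, A y u ∨ A u y → u = s := by
    rintro y ⟨hyY, hy⟩ u h
    have hys : att y = s := hY ⟨hyY, hy⟩
    rcases hatt.eq_or_of_adj_of_notMem hy h with rfl | ⟨hu, huy⟩
    · exact hys
    · exact absurd (hys ▸ huy ▸ hX ⟨hbip.symm.mem_right_of_adj hyY h, hu⟩) hst
  have hsink : ∀ y ∈ Y \ S, A y s ∧ deg A y ≤ 2 := by
    intro y hy
    obtain ⟨u, hyu⟩ := hstrong.exists_arc (ne_of_mem_of_not_mem (hatt.mem hy.2) hy.2).symm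
    refine ⟨hnbr y hy u (.inl hyu) ▸ hyu, ?_⟩
    simpa using deg_le_two_mul_ncard (T := {s}) (hnbr y hy)
  obtain ⟨x, y, hx, hy, hxy⟩ := (Set.one_lt_ncard_iff).1 hY2
  have := hdeg x y ⟨hxy, s, (hsink x hx).1, (hsink y hy).1⟩
  have := (hsink x hx).2
  have := (hsink y hy).2
  omega

end Bipartite

section Cycle

variable [Finite V] {A : V → V → Prop} {X Y : Set V} {a m : ℕ} [NeZero m] {f : ZMod m → V}
  {att : V → V}

theorem IsAttachment.sdiff_range_subset_fiber (hatt : IsAttachment A (Set.range f) att)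
    (hbip : IsBipartition A X Y) (hX : X.ncard = a)
    (hdeg : ∀ x y, DomPair A x y → 2 * a - 1 ≤ max (deg A x) (deg A y))
    (hinj : Function.Injective f) (hcyc : ∀ i, A (f i) (f (i + 1))) (hstrong : StrongConn A)
    {i : ZMod m} (hi : f i ∈ X) {v : V} (hv : v ∉ Set.range f) (hvi : att v = f i) :
    (m = 2 ∧ X \ Set.range f ⊆ att ⁻¹' {f i}) ∨
      X \ Set.range f ⊆ att ⁻¹' {f (i - 1)} := by
  have hm := NeZero.ne m
  have hk := hbip.two_mul_ncard_inter_range hinj hcyc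
  set S := Set.range f
  have hsplit := Set.ncard_inter_add_ncard_sdiff_eq_ncard X S
  have hfib (s : V) : (X \ S ∩ att ⁻¹' {s}).ncard ≤ (X \ S).ncard :=
    Set.ncard_le_ncard Set.inter_subset_left
  obtain ⟨w, hw, hwv, hwi⟩ := hatt.exists_arc_to_att hstrong (Set.mem_range_self i) hv
  rw [hvi] at hwv hwi
  have hpi : A (f (i - 1)) (f i) := by simpa using hcyc (i - 1)
  have hdw := hatt.deg_le_of_notMem hbip (hbip.mem_right_of_adj hi (.inr hwi)) hw
  have hdp := hatt.deg_le_of_mem hbip (hbip.mem_right_of_adj hi (.inr hpi)) (Set.mem_range_self _)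
  have hsing : (X ∩ {att w}).ncard ≤ 1 :=
    (Set.ncard_le_ncard Set.inter_subset_right).trans (Set.ncard_singleton _).le
  rw [hwv] at hdw hsing
  have hpair := hdeg w (f (i - 1)) ⟨fun h => hw (h ▸ Set.mem_range_self _), f i, hwi, hpi⟩
  have := hfib (f i)
  have := hfib (f (i - 1))
  rcases le_max_iff.1 hpair with h | h
  · exact .inl ⟨by omega, Set.subset_of_ncard_le_ncard_inter (by omega)⟩
  · exact .inr (Set.subset_of_ncard_le_ncard_inter (by omega))

theorem IsAttachment.false_of_fiber_pred_empty (hatt : IsAttachment A (Set.range f) att)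
    (hbip : IsBipartition A X Y) (hX : X.ncard = a) (hY : Y.ncard = a) (ha : 4 ≤ a)
    (hdeg : ∀ x y, DomPair A x y → 2 * a - 1 ≤ max (deg A x) (deg A y))
    (hinj : Function.Injective f) (hcyc : ∀ i, A (f i) (f (i + 1))) (hstrong : StrongConn A)
    (hm : m = 2) {i : ZMod m} (hi : f i ∈ X) {v : V} (hv : v ∉ Set.range f)
    (hvi : att v = f i) (hpred : ∀ u ∉ Set.range f, att u ≠ f (i - 1)) : False := by
  have hk := hbip.two_mul_ncard_inter_range hinj hcyc
  have hYS := hbip.symm.two_mul_ncard_sdiff_range hY hinj hcyc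
  set S := Set.range f
  obtain ⟨w, hw, hwv, hwi⟩ := hatt.exists_arc_to_att hstrong (Set.mem_range_self i) hv
  rw [hvi] at hwv hwi
  have hpi : A (f (i - 1)) (f i) := by simpa using hcyc (i - 1)
  have hwY := hbip.mem_right_of_adj hi (.inr hwi)
  have hdp := hatt.deg_le_of_mem hbip (hbip.mem_right_of_adj hi (.inr hpi)) (Set.mem_range_self _)
  have hfib : X \ S ∩ att ⁻¹' {f (i - 1)} = ∅ :=
    Set.eq_empty_of_forall_notMem fun u hu => hpred u hu.1.2 hu.2
  rw [hfib, Set.ncard_empty] at hdp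
  have hdw : 2 * a - 1 ≤ deg A w := by
    have := hdeg w (f (i - 1)) ⟨fun h => hw (h ▸ Set.mem_range_self _), f i, hwi, hpi⟩
    omega
  have hout : {u | A w u}.ncard ≤ a :=
    hX ▸ Set.ncard_le_ncard fun u hu => hbip.symm.mem_right_of_adj hwY (.inl hu)
  have hin : 1 < ({u | A u w} \ {f i}).ncard := by
    have := Set.pred_ncard_le_ncard_sdiff_singleton {u | A u w} (f i)
    unfold deg at hdw
    omega
  have hsmall : ∀ u ∈ {u | A u w} \ {f i}, deg A u ≤ 2 * (a - 1) := by
    rintro u ⟨huw, hui⟩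
    have hu : u ∉ S := fun h => hui (hwv ▸ hatt.eq_of_arc_to h hw huw)
    have hdu := hatt.deg_le_of_notMem hbip.symm (hbip.symm.mem_right_of_adj hwY (.inr huw)) hu
    rw [hatt.eq_of_offArc hu hw huw, hwv, Set.inter_singleton_eq_empty.2 (hbip.notMem_right hi),
      Set.ncard_empty] at hdu
    have := Set.ncard_le_ncard (Set.inter_subset_left (s := Y \ S) (t := att ⁻¹' {f i}))
    omega
  obtain ⟨x, y, hx, hy, hxy⟩ := (Set.one_lt_ncard_iff).1 hin
  have := hdeg x y ⟨hxy, w, hx.1, hy.1⟩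
  have := hsmall x hx
  have := hsmall y hy
  omega

theorem IsAttachment.false_of_length_eq_two (hatt : IsAttachment A (Set.range f) att)
    (hbip : IsBipartition A X Y) (hX : X.ncard = a) (hY : Y.ncard = a) (ha : 4 ≤ a)
    (hdeg : ∀ x y, DomPair A x y → 2 * a - 1 ≤ max (deg A x) (deg A y))
    (hinj : Function.Injective f) (hcyc : ∀ i, A (f i) (f (i + 1))) (hstrong : StrongConn A)
    (hm : m = 2) {i : ZMod m} (hi : f i ∈ X) {v : V} (hv : v ∉ Set.range f)
    (hvi : att v = f i) : False := by
  have hpi : A (f (i - 1)) (f i) := by simpa using hcyc (i - 1)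
  have hpY := hbip.mem_right_of_adj hi (.inr hpi)
  have hne : f i ≠ f (i - 1) := fun h => hbip.notMem_right hi (h ▸ hpY)
  have hXS := hbip.two_mul_ncard_sdiff_range hX hinj hcyc
  have hYS := hbip.symm.two_mul_ncard_sdiff_range hY hinj hcyc
  by_cases hpred : ∀ u ∉ Set.range f, att u ≠ f (i - 1)
  · exact hatt.false_of_fiber_pred_empty hbip hX hY ha hdeg hinj hcyc hstrong hm hi hv hvi hpred
  push Not at hpred
  obtain ⟨u, hu, hup⟩ := hpred
  have hii : i - 1 - 1 = i := (ZMod.sub_one_sub_one_eq_self_iff i).2 (hm ▸ dvd_rfl)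
  have hX' := (hatt.sdiff_range_subset_fiber hbip hX hdeg hinj hcyc hstrong hi hv hvi).imp_left
    And.right
  have hY' := (hatt.sdiff_range_subset_fiber hbip.symm hY hdeg hinj hcyc hstrong hpY hu
    hup).imp_left And.right
  rw [hii] at hY'
  rcases hX' with hXi | hXp <;> rcases hY' with hYp | hYi
  · exact hatt.false_of_attach_same_side hbip hstrong hXi hYp hi hne
      (Set.nonempty_of_ncard_ne_zero (by omega))
  · rcases hbip.eq_or_eq_of_subset_fibers hXi hYi hu with h | h <;> exact hne (h.symm.trans hup)
  · rcases hbip.eq_or_eq_of_subset_fibers hXp hYp hv with h | h <;> exact hne (hvi.symm.trans h)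
  · exact hatt.false_of_attach_other_side hbip hstrong hdeg (by omega) hXp hYi hne (by omega)

theorem IsAttachment.false_of_two_lt_length (hatt : IsAttachment A (Set.range f) att)
    (hbip : IsBipartition A X Y) (hX : X.ncard = a) (hY : Y.ncard = a)
    (hdeg : ∀ x y, DomPair A x y → 2 * a - 1 ≤ max (deg A x) (deg A y))
    (hinj : Function.Injective f) (hcyc : ∀ i, A (f i) (f (i + 1))) (hstrong : StrongConn A)
    (hm : 2 < m) (hma : m ≤ 2 * a - 2) {i : ZMod m} (hi : f i ∈ X) {v : V}
    (hv : v ∉ Set.range f) (hvi : att v = f i) : False := by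
  have hpi : A (f (i - 1)) (f i) := by simpa using hcyc (i - 1)
  have hpY := hbip.mem_right_of_adj hi (.inr hpi)
  have hXS := hbip.two_mul_ncard_sdiff_range hX hinj hcyc
  have hX' := (hatt.sdiff_range_subset_fiber hbip hX hdeg hinj hcyc hstrong hi hv hvi).resolve_left
    fun h => hm.ne' h.1
  obtain ⟨x, hx⟩ := Set.nonempty_of_ncard_ne_zero (s := X \ Set.range f) (by omega)
  have hY' := (hatt.sdiff_range_subset_fiber hbip.symm hY hdeg hinj hcyc hstrong hpY hx.2
    (hX' hx)).resolve_left fun h => hm.ne' h.1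
  rcases hbip.eq_or_eq_of_subset_fibers hX' hY' hv with h | h
  · exact hbip.notMem_right hi (hvi ▸ h ▸ hpY)
  · have := (ZMod.sub_one_sub_one_eq_self_iff i).1 (hinj (h.symm.trans hvi))
    exact hm.not_ge (Nat.le_of_dvd two_pos this)

theorem IsAttachment.false_of_att_mem (hatt : IsAttachment A (Set.range f) att)
    (hbip : IsBipartition A X Y) (hX : X.ncard = a) (hY : Y.ncard = a) (ha : 4 ≤ a)
    (hdeg : ∀ x y, DomPair A x y → 2 * a - 1 ≤ max (deg A x) (deg A y))
    (hinj : Function.Injective f) (hcyc : ∀ i, A (f i) (f (i + 1))) (hstrong : StrongConn A)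
    (hm2 : 2 ≤ m) (hma : m ≤ 2 * a - 2) {v : V} (hv : v ∉ Set.range f) (hvX : att v ∈ X) :
    False := by
  obtain ⟨i, hi⟩ := hatt.mem hv
  rcases hm2.eq_or_lt with hm | hm
  · exact hatt.false_of_length_eq_two hbip hX hY ha hdeg hinj hcyc hstrong hm.symm (hi ▸ hvX) hv
      hi.symm
  · exact hatt.false_of_two_lt_length hbip hX hY hdeg hinj hcyc hstrong hm hma (hi ▸ hvX) hv
      hi.symm

end Cycle

/-- If `D` is a strongly connected balanced bipartite digraph of order `2a ≥ 8`
satisfying `max {d(x), d(y)} ≥ 2a − 1` for every dominating pair, then every directed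
cycle of length `m` with `2 ≤ m ≤ 2a − 2` has a bypass. -/
theorem stmt15 [Fintype V] (A : V → V → Prop) (X Y : Set V) (a : ℕ) (ha : 4 ≤ a)
    (hX : X.ncard = a) (hY : Y.ncard = a) (hbip : IsBipartition A X Y)
    (hstrong : StrongConn A)
    (hdeg : ∀ x y : V, DomPair A x y → 2 * a - 1 ≤ max (deg A x) (deg A y))
    (m : ℕ) (hm2 : 2 ≤ m) (hm : m ≤ 2 * a - 2)
    (f : ZMod m → V) (hinj : Function.Injective f)
    (hcyc : ∀ i, A (f i) (f (i + 1))) :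
    HasBypass A (Set.range f) := by
  have : NeZero m := ⟨by omega⟩
  by_contra hnb
  obtain ⟨att, hatt⟩ := exists_isAttachment hstrong (Set.range_nonempty f) hnb
  have hXS := hbip.two_mul_ncard_sdiff_range hX hinj hcyc
  obtain ⟨v, -, hv⟩ := Set.nonempty_of_ncard_ne_zero (s := X \ Set.range f) (by omega)
  rcases hbip.mem_or_mem (att v) with h | h
  · exact hatt.false_of_att_mem hbip hX hY ha hdeg hinj hcyc hstrong hm2 hm hv h
  · exact hatt.false_of_att_mem hbip.symm hY hX ha hdeg hinj hcyc hstrong hm2 hm hv h
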